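/- arXiv:1906.03328 — 3 statements merged into one kernel-verified Lean document; each statement's English description precedes it below -/
import Mathlib

section
/- A finite simple graph G with no isolated vertices has a disconnected matching complex if and only if G is the 4-cycle C₄, or G is the complete graph K₄, or G has at least two edges and some edge of G is incident to all other edges of G. -/
open SimpleGraph Finset

/-- Two edges (elements of `Sym2 V`) are incident if they share a vertex. -/
def Incid {V : Type} (e f : Sym2 V) : Prop := ∃ v, v ∈ e ∧ v ∈ f

/-- A face of the matching complex `M(G)`: a finite set of edges of `G`
that are pairwise non-incident (a matching of `G`). -/
def IsMatchingSet {V : Type} (G : SimpleGraph V) (s : Finset (Sym2 V)) : Prop :=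
  (∀ e ∈ s, e ∈ G.edgeSet) ∧ ∀ e ∈ s, ∀ f ∈ s, e ≠ f → ¬ Incid e f

/-- The 1-skeleton of the matching complex of `G`: the graph whose vertices are
the edges of `G`, two being adjacent iff they are distinct and non-incident. -/
def mcSkeleton {V : Type} (G : SimpleGraph V) : SimpleGraph G.edgeSet where
  Adj e f := e ≠ f ∧ ¬ Incid (e : Sym2 V) (f : Sym2 V)
  symm := ⟨fun e f h =>
    ⟨h.1.symm, fun hi => h.2 (Exists.elim hi fun v hv => ⟨v, hv.2, hv.1⟩)⟩⟩
  loopless := ⟨fun e h => h.1 rfl⟩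

/-- The cycle on `ZMod n` (for `n ≥ 3` this is the `n`-cycle `Cₙ`). -/
def cycZ (n : ℕ) : SimpleGraph (ZMod n) :=
  SimpleGraph.fromRel (fun i j => j = i + 1)

section Helpers

instance {V : Type} [DecidableEq V] [Fintype V] : DecidableRel (@Incid V) :=
  fun _ _ => Fintype.decidableExistsFintype

instance : DecidableRel (cycZ 4).Adj := fun a b => by
  unfold cycZ; exact inferInstanceAs (Decidable (a ≠ b ∧ _))

instance : DecidableRel (completeGraph (Fin 4)).Adj :=
  fun a b => inferInstanceAs (Decidable (a ≠ b))

instance {V : Type} [DecidableEq V] [Fintype V] (G : SimpleGraph V) [DecidableRel G.Adj] :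
    DecidableRel (mcSkeleton G).Adj := fun _ _ => instDecidableAnd

lemma incid_iff {V : Type} (a b c d : V) :
    Incid s(a,b) s(c,d) ↔ a = c ∨ a = d ∨ b = c ∨ b = d := by
  constructor
  · rintro ⟨v, hv1, hv2⟩
    rw [Sym2.mem_iff] at hv1 hv2
    rcases hv1 with rfl | rfl <;> tauto
  · rintro (rfl | rfl | rfl | rfl)
    exacts [⟨a, by simp, by simp⟩, ⟨a, by simp, by simp⟩,
      ⟨b, by simp, by simp⟩, ⟨b, by simp, by simp⟩]

lemma notIncid_of {V : Type} {a b c d : V}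
    (h1 : a ≠ c) (h2 : a ≠ d) (h3 : b ≠ c) (h4 : b ≠ d) : ¬ Incid s(a,b) s(c,d) := by
  rw [incid_iff]; push_neg; exact ⟨h1, h2, h3, h4⟩

lemma incid_refl {V : Type} (e : Sym2 V) : Incid e e := by
  induction e using Sym2.ind with
  | _ x y => exact ⟨x, by simp, by simp⟩

lemma incid_symm {V : Type} {e f : Sym2 V} (h : Incid e f) : Incid f e :=
  h.elim fun v hv => ⟨v, hv.2, hv.1⟩

/-- An iso of graphs induces an iso of matching-complex skeletons. -/
def mcIso {V W : Type} {G : SimpleGraph V} {H : SimpleGraph W} (φ : G ≃g H) :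
    mcSkeleton G ≃g mcSkeleton H where
  toEquiv := φ.mapEdgeSet
  map_rel_iff' := by
    rintro ⟨e, he⟩ ⟨f, hf⟩
    show ((_ ≠ _) ∧ _) ↔ ((_ ≠ _) ∧ _)
    have hmapinj : Function.Injective (Sym2.map φ) :=
      Sym2.map.injective φ.injective
    constructor
    · rintro ⟨h1, h2⟩
      refine ⟨fun hh => h1 (by
        apply Subtype.ext; exact congrArg (Sym2.map φ) (congrArg Subtype.val hh)), ?_⟩
      rintro ⟨v, hv1, hv2⟩
      exact h2 ⟨φ v, Sym2.mem_map.2 ⟨v, hv1, rfl⟩, Sym2.mem_map.2 ⟨v, hv2, rfl⟩⟩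
    · rintro ⟨h1, h2⟩
      refine ⟨fun hh => h1 (Subtype.ext (hmapinj (congrArg Subtype.val hh))), ?_⟩
      rintro ⟨v, hv1, hv2⟩
      obtain ⟨u, hu, rfl⟩ := Sym2.mem_map.1 hv1
      obtain ⟨u', hu', he'⟩ := Sym2.mem_map.1 hv2
      exact h2 ⟨u, hu, (φ.injective he').symm ▸ hu'⟩

lemma preconnected_transfer {V W : Type} {G : SimpleGraph V} {H : SimpleGraph W}
    (φ : G ≃g H) : (mcSkeleton G).Preconnected ↔ (mcSkeleton H).Preconnected := by
  let ψ := mcIso φ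
  constructor
  · intro h u v
    have := (h (ψ.symm u) (ψ.symm v)).map ψ.toHom
    simpa using this
  · intro h u v
    have := (h (ψ u) (ψ v)).map ψ.symm.toHom
    simpa using this

lemma c4_mc_disconnected : ¬ (mcSkeleton (cycZ 4)).Preconnected := by decide

lemma k4_mc_disconnected : ¬ (mcSkeleton (completeGraph (Fin 4))).Preconnected := by decide

lemma c4_iso {V : Type} [DecidableEq V] (G : SimpleGraph V) (a b c d : V)
    (hab : a≠b) (hac : a≠c) (had : a≠d) (hbc : b≠c) (hbd : b≠d) (hcd : c≠d)
    (hvert : ∀ v : V, v = a ∨ v = b ∨ v = c ∨ v = d)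
    (hadj : ∀ x y, G.Adj x y ↔
      (s(x,y) = s(a,b) ∨ s(x,y) = s(a,c) ∨ s(x,y) = s(b,d) ∨ s(x,y) = s(c,d))) :
    Nonempty (G ≃g cycZ 4) := by
  have h4 : ∀ j : ZMod 4, j = 0 ∨ j = 1 ∨ j = 2 ∨ j = 3 := by decide
  set k : ZMod 4 → V := fun i => if i = 0 then a else if i = 1 then b else if i = 2 then d else c with hk
  set k' : V → ZMod 4 := fun v => if v = a then 0 else if v = b then 1 else if v = d then 2 else 3 with hk'
  have z10 : (1:ZMod 4) ≠ 0 := by decide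
  have z20 : (2:ZMod 4) ≠ 0 := by decide
  have z21 : (2:ZMod 4) ≠ 1 := by decide
  have z30 : (3:ZMod 4) ≠ 0 := by decide
  have z31 : (3:ZMod 4) ≠ 1 := by decide
  have z32 : (3:ZMod 4) ≠ 2 := by decide
  have li : Function.LeftInverse k' k := by
    intro i
    rcases h4 i with rfl|rfl|rfl|rfl <;>
      simp [hk, hk', z10, z20, z21, z30, z31, z32, hab, hac, had, hbc, hbd, hcd,
        hab.symm, hac.symm, had.symm, hbc.symm, hbd.symm, hcd.symm]
  have ri : Function.RightInverse k' k := by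
    intro v
    rcases hvert v with rfl|rfl|rfl|rfl <;>
      simp [hk, hk', z10, z20, z21, z30, z31, z32, hab, hac, had, hbc, hbd, hcd,
        hab.symm, hac.symm, had.symm, hbc.symm, hbd.symm, hcd.symm]
  refine ⟨SimpleGraph.Iso.symm ⟨⟨k, k', li, ri⟩, ?_⟩⟩
  intro i j
  simp only [Equiv.coe_fn_mk]
  rcases h4 i with rfl|rfl|rfl|rfl <;> rcases h4 j with rfl|rfl|rfl|rfl <;>
    simp [hk, z10, z20, z21, z30, z31, z32, hadj, Sym2.eq_iff, cycZ, hab, hac, had, hbc, hbd, hcd,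
      hab.symm, hac.symm, had.symm, hbc.symm, hbd.symm, hcd.symm] <;> decide

lemma k4_iso {V : Type} [DecidableEq V] (G : SimpleGraph V) (a b c d : V)
    (hab : a≠b) (hac : a≠c) (had : a≠d) (hbc : b≠c) (hbd : b≠d) (hcd : c≠d)
    (hvert : ∀ v : V, v = a ∨ v = b ∨ v = c ∨ v = d)
    (hadj : ∀ x y : V, G.Adj x y ↔ x ≠ y) :
    Nonempty (G ≃g completeGraph (Fin 4)) := by
  set k : Fin 4 → V := fun i => if i = 0 then a else if i = 1 then b else if i = 2 then c else d with hk
  set k' : V → Fin 4 := fun v => if v = a then 0 else if v = b then 1 else if v = c then 2 else 3 with hk'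
  have li : Function.LeftInverse k' k := by
    intro i
    fin_cases i <;>
      simp [hk, hk', hab, hac, had, hbc, hbd, hcd, hab.symm, hac.symm, had.symm,
        hbc.symm, hbd.symm, hcd.symm]
  have ri : Function.RightInverse k' k := by
    intro v
    rcases hvert v with rfl|rfl|rfl|rfl <;>
      simp [hk, hk', hab, hac, had, hbc, hbd, hcd, hab.symm, hac.symm, had.symm,
        hbc.symm, hbd.symm, hcd.symm]
  refine ⟨SimpleGraph.Iso.symm ⟨⟨k, k', li, ri⟩, ?_⟩⟩
  intro i j
  simp only [Equiv.coe_fn_mk, completeGraph, SimpleGraph.top_adj, hadj, li.injective.ne_iff]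

end Helpers

set_option maxHeartbeats 2000000 in
/-- A finite simple graph `G` with no isolated vertices has a
disconnected matching complex iff `G ≅ C₄`, or `G ≅ K₄`, or `G` has at least two
edges and some edge of `G` is incident to all other edges of `G`. -/
theorem matchingComplex_disconnected_iff {V : Type} [Fintype V] [DecidableEq V]
    (G : SimpleGraph V) (hiso : ∀ v : V, ∃ w, G.Adj v w) :
    ¬ (mcSkeleton G).Preconnected ↔
      (Nonempty (G ≃g cycZ 4) ∨ Nonempty (G ≃g completeGraph (Fin 4)) ∨
        ((∃ e f : Sym2 V, e ∈ G.edgeSet ∧ f ∈ G.edgeSet ∧ e ≠ f) ∧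
          ∃ e ∈ G.edgeSet, ∀ f ∈ G.edgeSet, f ≠ e → Incid e f)) := by
  constructor
  · -- forward direction
    intro hnp
    unfold SimpleGraph.Preconnected at hnp
    push_neg at hnp
    obtain ⟨E, F, hEF⟩ := hnp
    obtain ⟨e, he⟩ := E
    obtain ⟨f, hf⟩ := F
    have hEFne : e ≠ f := by
      rintro rfl
      exact hEF (SimpleGraph.Reachable.refl _)
    have h2 : ∃ e f : Sym2 V, e ∈ G.edgeSet ∧ f ∈ G.edgeSet ∧ e ≠ f :=
      ⟨e, f, he, hf, hEFne⟩
    by_cases hdom : ∃ e ∈ G.edgeSet, ∀ f ∈ G.edgeSet, f ≠ e → Incid e f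
    · exact Or.inr (Or.inr ⟨h2, hdom⟩)
    push_neg at hdom
    -- basic reachability construction
    have reach : ∀ (x y : Sym2 V) (hx : x ∈ G.edgeSet) (hy : y ∈ G.edgeSet),
        ¬ Incid x y → (mcSkeleton G).Reachable ⟨x, hx⟩ ⟨y, hy⟩ := by
      intro x y hx hy h
      refine SimpleGraph.Adj.reachable ⟨?_, h⟩
      intro hh
      apply h
      obtain rfl : x = y := congrArg Subtype.val hh
      exact incid_refl x
    -- e and f must be incident
    have hInc : Incid e f := by
      by_contra h
      exact hEF (reach e f he hf h)
    obtain ⟨a, hae, haf⟩ := hInc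
    obtain ⟨b, rfl⟩ := Sym2.mem_iff_exists.1 hae
    obtain ⟨c, rfl⟩ := Sym2.mem_iff_exists.1 haf
    have hab : a ≠ b := (G.mem_edgeSet.1 he).ne
    have hac : a ≠ c := (G.mem_edgeSet.1 hf).ne
    have hbc : b ≠ c := by
      rintro rfl
      exact hEFne rfl
    -- every edge is incident to e or to f
    have step1 : ∀ g ∈ G.edgeSet, Incid g s(a,b) ∨ Incid g s(a,c) := by
      intro g hg
      by_contra h
      push_neg at h
      exact hEF (((reach s(a,b) g he hg (fun hi => h.1 (incid_symm hi))).trans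
        (reach g s(a,c) hg hf h.2)))
    -- edges disjoint from e have the form s(c, x)
    have getCx : ∀ g ∈ G.edgeSet, ¬ Incid s(a,b) g →
        ∃ x, g = s(c,x) ∧ a ≠ x ∧ b ≠ x ∧ c ≠ x := by
      intro g hg hni
      have h1 : Incid g s(a,c) := by
        rcases step1 g hg with h | h
        · exact absurd (incid_symm h) hni
        · exact h
      obtain ⟨v, hv1, hv2⟩ := h1
      rw [Sym2.mem_iff] at hv2
      rcases hv2 with rfl | rfl
      · exact absurd ⟨v, by simp, hv1⟩ hni
      · obtain ⟨x, rfl⟩ := Sym2.mem_iff_exists.1 hv1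
        rw [incid_iff] at hni
        push_neg at hni
        obtain ⟨_, h2, _, h4⟩ := hni
        exact ⟨x, rfl, h2, h4, (G.mem_edgeSet.1 hg).ne⟩
    -- edges disjoint from f have the form s(b, x)
    have getBx : ∀ g ∈ G.edgeSet, ¬ Incid s(a,c) g →
        ∃ x, g = s(b,x) ∧ a ≠ x ∧ c ≠ x ∧ b ≠ x := by
      intro g hg hni
      have h1 : Incid g s(a,b) := by
        rcases step1 g hg with h | h
        · exact h
        · exact absurd (incid_symm h) hni
      obtain ⟨v, hv1, hv2⟩ := h1
      rw [Sym2.mem_iff] at hv2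
      rcases hv2 with rfl | rfl
      · exact absurd ⟨v, by simp, hv1⟩ hni
      · obtain ⟨x, rfl⟩ := Sym2.mem_iff_exists.1 hv1
        rw [incid_iff] at hni
        push_neg at hni
        obtain ⟨_, h2, _, h4⟩ := hni
        exact ⟨x, rfl, h2, h4, (G.mem_edgeSet.1 hg).ne⟩
    -- obtain the edge s(c, d) disjoint from e
    obtain ⟨g1, hg1, -, hni1⟩ := hdom s(a,b) he
    obtain ⟨d, rfl, had, hbd, hcd⟩ := getCx g1 hg1 hni1
    -- obtain the edge s(b, d') disjoint from f
    obtain ⟨g2, hg2, -, hni2⟩ := hdom s(a,c) hf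
    obtain ⟨d', rfl, had', hcd', hbd'⟩ := getBx g2 hg2 hni2
    -- d' = d
    have hdd : d' = d := by
      by_contra hdd
      exact hEF ((reach s(a,b) s(c,d) he hg1 (notIncid_of hac had hbc hbd)).trans
        ((reach s(c,d) s(b,d') hg1 hg2
          (notIncid_of hbc.symm hcd' hbd.symm (fun h => hdd h.symm))).trans
        (reach s(b,d') s(a,c) hg2 hf (notIncid_of hab.symm hbc had'.symm hcd'.symm))))
    rw [hdd] at hg2
    -- the only edge disjoint from e is s(c,d)
    have step5 : ∀ g ∈ G.edgeSet, ¬ Incid s(a,b) g → g = s(c,d) := by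
      intro g hg hni
      obtain ⟨x, rfl, hax, hbx, hcx⟩ := getCx g hg hni
      by_cases hxd : x = d
      · rw [hxd]
      · exfalso
        apply hEF
        exact (reach s(a,b) s(c,x) he hg hni).trans
          ((reach s(c,x) s(b,d) hg hg2
            (notIncid_of hbc.symm hcd hbx.symm hxd)).trans
          (reach s(b,d) s(a,c) hg2 hf (notIncid_of hab.symm hbc had.symm hcd.symm)))
    -- the only edge disjoint from f is s(b,d)
    have step6 : ∀ g ∈ G.edgeSet, ¬ Incid s(a,c) g → g = s(b,d) := by
      intro g hg hni
      obtain ⟨x, rfl, hax, hcx, hbx⟩ := getBx g hg hni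
      by_cases hxd : x = d
      · rw [hxd]
      · exfalso
        apply hEF
        exact (reach s(a,b) s(c,d) he hg1 (notIncid_of hac had hbc hbd)).trans
          ((reach s(c,d) s(b,x) hg1 hg
            (notIncid_of hbc.symm hcx hbd.symm (fun h => hxd h.symm))).trans
          (reach s(b,x) s(a,c) hg hf (notIncid_of hab.symm hbc hax.symm hcx.symm)))
    -- edges through a
    have step7 : ∀ g ∈ G.edgeSet, a ∈ g → (g = s(a,b) ∨ g = s(a,c) ∨ g = s(a,d)) := by
      intro g hg hmem
      obtain ⟨x, rfl⟩ := Sym2.mem_iff_exists.1 hmem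
      by_cases h1 : x = b
      · left; rw [h1]
      by_cases h2 : x = c
      · right; left; rw [h2]
      by_cases h3 : x = d
      · right; right; rw [h3]
      exfalso
      apply hEF
      have hax : a ≠ x := (G.mem_edgeSet.1 hg).ne
      exact (reach s(a,b) s(c,d) he hg1 (notIncid_of hac had hbc hbd)).trans
        (((reach s(c,d) s(a,x) hg1 hg
          (notIncid_of hac.symm (fun h => h2 h.symm) had.symm (fun h => h3 h.symm))).trans
        (reach s(a,x) s(b,d) hg hg2 (notIncid_of hab had h1 h3))).trans
        (reach s(b,d) s(a,c) hg2 hf (notIncid_of hab.symm hbc had.symm hcd.symm)))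
    -- classification of all edges
    have step8 : ∀ g ∈ G.edgeSet, g = s(a,b) ∨ g = s(a,c) ∨ g = s(a,d) ∨
        g = s(b,c) ∨ g = s(b,d) ∨ g = s(c,d) := by
      intro g hg
      by_cases h5 : Incid s(a,b) g
      · by_cases h6 : Incid s(a,c) g
        · by_cases ha : a ∈ g
          · rcases step7 g hg ha with h|h|h <;> tauto
          · obtain ⟨v, hv1, hv2⟩ := h5
            rw [Sym2.mem_iff] at hv1
            rcases hv1 with rfl|rfl
            · exact absurd hv2 ha
            · obtain ⟨v', hv1', hv2'⟩ := h6
              rw [Sym2.mem_iff] at hv1'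
              rcases hv1' with rfl|rfl
              · exact absurd hv2' ha
              · obtain ⟨y, rfl⟩ := Sym2.mem_iff_exists.1 hv2
                rw [Sym2.mem_iff] at hv2'
                rcases hv2' with h|rfl
                · exact absurd h.symm hbc
                · tauto
        · have := step6 g hg h6; tauto
      · have := step5 g hg h5; tauto
    have hvert : ∀ v : V, v = a ∨ v = b ∨ v = c ∨ v = d := by
      intro v
      obtain ⟨w, hw⟩ := hiso v
      rcases step8 _ (G.mem_edgeSet.2 hw) with h|h|h|h|h|h <;>
        (rw [Sym2.eq_iff] at h; tauto)
    by_cases hAD : s(a,d) ∈ G.edgeSet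
    · by_cases hBC : s(b,c) ∈ G.edgeSet
      · -- K4
        refine Or.inr (Or.inl (k4_iso G a b c d hab hac had hbc hbd hcd hvert ?_))
        intro x y
        constructor
        · exact fun h => h.ne
        · intro hxy
          have hsym : ∀ u v : V, s(u,v) ∈ G.edgeSet → G.Adj u v :=
            fun u v h => G.mem_edgeSet.1 h
          rcases hvert x with rfl|rfl|rfl|rfl <;> rcases hvert y with rfl|rfl|rfl|rfl <;>
            first
              | exact absurd rfl hxy
              | exact hsym _ _ he | exact (hsym _ _ he).symm
              | exact hsym _ _ hf | exact (hsym _ _ hf).symm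
              | exact hsym _ _ hg1 | exact (hsym _ _ hg1).symm
              | exact hsym _ _ hg2 | exact (hsym _ _ hg2).symm
              | exact hsym _ _ hAD | exact (hsym _ _ hAD).symm
              | exact hsym _ _ hBC | exact (hsym _ _ hBC).symm
      · -- impossible: s(a,d) would dominate
        exfalso
        obtain ⟨g, hg, hgne, hgni⟩ := hdom s(a,d) hAD
        rcases step8 g hg with rfl|rfl|rfl|rfl|rfl|rfl
        · exact hgni ((incid_iff _ _ _ _).2 (by tauto))
        · exact hgni ((incid_iff _ _ _ _).2 (by tauto))
        · exact hgne rfl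
        · exact hBC hg
        · exact hgni ((incid_iff _ _ _ _).2 (by tauto))
        · exact hgni ((incid_iff _ _ _ _).2 (by tauto))
    · by_cases hBC : s(b,c) ∈ G.edgeSet
      · -- impossible: s(b,c) would dominate
        exfalso
        obtain ⟨g, hg, hgne, hgni⟩ := hdom s(b,c) hBC
        rcases step8 g hg with rfl|rfl|rfl|rfl|rfl|rfl
        · exact hgni ((incid_iff _ _ _ _).2 (by tauto))
        · exact hgni ((incid_iff _ _ _ _).2 (by tauto))
        · exact hAD hg
        · exact hgne rfl
        · exact hgni ((incid_iff _ _ _ _).2 (by tauto))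
        · exact hgni ((incid_iff _ _ _ _).2 (by tauto))
      · -- C4
        refine Or.inl (c4_iso G a b c d hab hac had hbc hbd hcd hvert ?_)
        intro x y
        constructor
        · intro h
          have hm : s(x,y) ∈ G.edgeSet := G.mem_edgeSet.2 h
          rcases step8 _ hm with h'|h'|h'|h'|h'|h'
          · tauto
          · tauto
          · rw [h'] at hm; exact absurd hm hAD
          · rw [h'] at hm; exact absurd hm hBC
          · tauto
          · tauto
        · rintro (h|h|h|h) <;>
          · rw [← G.mem_edgeSet, h]
            first | exact he | exact hf | exact hg1 | exact hg2
  · -- backward direction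
    rintro (hφ | hφ | ⟨⟨e, f, he, hf, hnef⟩, g, hg, hdom⟩) <;> intro hp
    · obtain ⟨φ⟩ := hφ
      exact c4_mc_disconnected ((preconnected_transfer φ).1 hp)
    · obtain ⟨φ⟩ := hφ
      exact k4_mc_disconnected ((preconnected_transfer φ).1 hp)
    · obtain ⟨x, hx, hxg⟩ : ∃ x, x ∈ G.edgeSet ∧ x ≠ g := by
        by_cases h : e = g
        · exact ⟨f, hf, fun hh => hnef (by rw [h, hh])⟩
        · exact ⟨e, he, h⟩
      have key : ∀ y : G.edgeSet, (mcSkeleton G).Walk ⟨g, hg⟩ y → y.1 = g := by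
        intro y w
        cases w with
        | nil => rfl
        | cons h p =>
          exact absurd (hdom _ (by exact (Subtype.prop _))
            (fun hh => h.1 (Subtype.ext hh.symm))) h.2
      obtain ⟨w⟩ := hp ⟨g, hg⟩ ⟨x, hx⟩
      exact hxg (key ⟨x, hx⟩ w)
end

section
/- No matching complex contains an induced path on six vertices. That is, for every finite simple graph G, the 1-skeleton of M(G) has no induced subgraph isomorphic to P₆. -/
open SimpleGraph Finset

/-- If a `Sym2` element contains three vertices, two consecutive inequalities
force the outer two to coincide. -/
lemma sym2_three {V : Type} {e : Sym2 V} {x y z : V}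
    (hx : x ∈ e) (hy : y ∈ e) (hz : z ∈ e) (hxy : x ≠ y) (hyz : y ≠ z) : x = z := by
  have he : e = s(x, y) := (Sym2.mem_and_mem_iff hxy).mp ⟨hx, hy⟩
  rw [he, Sym2.mem_iff] at hz
  rcases hz with h | h
  · exact h.symm
  · exact absurd h.symm hyz

/-- No matching complex contains an induced path on six
vertices: the 1-skeleton of `M(G)` has no induced subgraph isomorphic to `P₆`. -/
theorem no_induced_P6_in_matchingComplex {V : Type} (G : SimpleGraph V)
    (v : Fin 6 → G.edgeSet) (hinj : Function.Injective v) :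
    ¬ (∀ i j : Fin 6, (mcSkeleton G).Adj (v i) (v j) ↔
        (i.val + 1 = j.val ∨ j.val + 1 = i.val)) := by
  intro h
  -- non-consecutive pairs are incident
  have inc : ∀ i j : Fin 6, i ≠ j → ¬(i.val + 1 = j.val ∨ j.val + 1 = i.val) →
      Incid ((v i : G.edgeSet) : Sym2 V) (v j) := by
    intro i j hne hnum
    by_contra hni
    exact hnum ((h i j).mp ⟨fun he => hne (hinj he), hni⟩)
  -- consecutive pairs are non-incident
  have ninc : ∀ i j : Fin 6, (i.val + 1 = j.val) →
      ¬ Incid ((v i : G.edgeSet) : Sym2 V) (v j) :=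
    fun i j hij => ((h i j).mpr (Or.inl hij)).2
  obtain ⟨w2, hw2a, hw2b⟩ := inc 0 2 (by decide) (by decide)
  obtain ⟨w3, hw3a, hw3b⟩ := inc 0 3 (by decide) (by decide)
  obtain ⟨w4, hw4a, hw4b⟩ := inc 0 4 (by decide) (by decide)
  obtain ⟨w5, hw5a, hw5b⟩ := inc 0 5 (by decide) (by decide)
  obtain ⟨z3, hz3a, hz3b⟩ := inc 1 3 (by decide) (by decide)
  obtain ⟨z4, hz4a, hz4b⟩ := inc 1 4 (by decide) (by decide)
  obtain ⟨z5, hz5a, hz5b⟩ := inc 1 5 (by decide) (by decide)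
  have n01 := ninc 0 1 rfl
  have n34 := ninc 3 4 rfl
  have n45 := ninc 4 5 rfl
  have hw34 : w3 ≠ w4 := fun he => n34 ⟨w3, hw3b, he ▸ hw4b⟩
  have hw45 : w4 ≠ w5 := fun he => n45 ⟨w4, hw4b, he ▸ hw5b⟩
  have hz34 : z3 ≠ z4 := fun he => n34 ⟨z3, hz3b, he ▸ hz4b⟩
  have hz45 : z4 ≠ z5 := fun he => n45 ⟨z4, hz4b, he ▸ hz5b⟩
  -- e₃ and e₅ meet e₀ in the same vertex, likewise e₁
  have hw : w3 = w5 := sym2_three hw3a hw4a hw5a hw34 hw45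
  have hz : z3 = z5 := sym2_three hz3a hz4a hz5a hz34 hz45
  by_cases hwz : w3 = z3
  · exact n01 ⟨w3, hw3a, hwz ▸ hz3a⟩
  · have h3 : ((v 3 : G.edgeSet) : Sym2 V) = s(w3, z3) :=
      (Sym2.mem_and_mem_iff hwz).mp ⟨hw3b, hz3b⟩
    have h5 : ((v 5 : G.edgeSet) : Sym2 V) = s(w3, z3) :=
      (Sym2.mem_and_mem_iff hwz).mp ⟨hw ▸ hw5b, hz ▸ hz5b⟩
    have : v 3 = v 5 := Subtype.ext (h3.trans h5.symm)
    exact absurd (hinj this) (by decide)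
end

section
/- No cycle Cₙ with n ≥ 7 is a matching complex: there is no finite simple graph G with M(G) isomorphic to the cycle Cₙ for n ≥ 7. -/
open SimpleGraph Finset

/-- Auxiliary combinatorial core: an "induced `P₆`" configuration of edges
(sym2's) is impossible. -/
lemma incid_core {V : Type} (m2 m3 m4 m5 m6 : Sym2 V) (a b : V)
    (h46 : m4 ≠ m6)
    (d12 : ¬ Incid s(a, b) m2) (d34 : ¬ Incid m3 m4)
    (d45 : ¬ Incid m4 m5) (d56 : ¬ Incid m5 m6)
    (ha3 : a ∈ m3)
    (i14 : Incid s(a, b) m4) (i15 : Incid s(a, b) m5) (i16 : Incid s(a, b) m6)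
    (i24 : Incid m2 m4) (i25 : Incid m2 m5) (i26 : Incid m2 m6) : False := by
  unfold Incid at d12 d34 d45 d56 i14 i15 i16 i24 i25 i26
  obtain ⟨v, hv1, hv4⟩ := i14
  rw [Sym2.mem_iff] at hv1
  have hb4 : b ∈ m4 := by
    rcases hv1 with rfl | rfl
    · exact absurd ⟨v, ha3, hv4⟩ d34
    · exact hv4
  obtain ⟨w, hw1, hw5⟩ := i15
  rw [Sym2.mem_iff] at hw1
  have ha5 : a ∈ m5 := by
    rcases hw1 with rfl | rfl
    · exact hw5
    · exact absurd ⟨w, hb4, hw5⟩ d45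
  obtain ⟨u, hu1, hu6⟩ := i16
  rw [Sym2.mem_iff] at hu1
  have hb6 : b ∈ m6 := by
    rcases hu1 with rfl | rfl
    · exact absurd ⟨u, ha5, hu6⟩ d56
    · exact hu6
  obtain ⟨v4, h42, h44⟩ := i24
  obtain ⟨v5, h52, h55⟩ := i25
  obtain ⟨v6, h62, h66⟩ := i26
  have n4b : v4 ≠ b := fun h => d12 ⟨b, Sym2.mem_mk_right a b, h ▸ h42⟩
  have n5a : v5 ≠ a := fun h => d12 ⟨a, Sym2.mem_mk_left a b, h ▸ h52⟩
  have n6b : v6 ≠ b := fun h => d12 ⟨b, Sym2.mem_mk_right a b, h ▸ h62⟩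
  have n45 : v4 ≠ v5 := fun h => d45 ⟨v4, h44, h ▸ h55⟩
  have n56 : v5 ≠ v6 := fun h => d56 ⟨v6, h ▸ h55, h66⟩
  have n46 : v4 ≠ v6 := by
    intro h
    apply h46
    have e4 : m4 = s(b, v4) := (Sym2.mem_and_mem_iff (Ne.symm n4b)).mp ⟨hb4, h44⟩
    have e6 : m6 = s(b, v6) := (Sym2.mem_and_mem_iff (Ne.symm n6b)).mp ⟨hb6, h66⟩
    rw [e4, e6, h]
  have e2 : m2 = s(v4, v5) := (Sym2.mem_and_mem_iff n45).mp ⟨h42, h52⟩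
  rw [e2, Sym2.mem_iff] at h62
  rcases h62 with h | h
  · exact n46 h.symm
  · exact n56 h.symm

/-- No cycle `Cₙ` with `n ≥ 7` is a matching complex. -/
theorem no_matchingComplex_Cn_of_seven_le (n : ℕ) (hn : 7 ≤ n) {V : Type}
    (G : SimpleGraph V) : ¬ Nonempty (mcSkeleton G ≃g cycZ n) := by
  rintro ⟨φ⟩
  have modne : ∀ a b : ℕ, a < b → b - a < n → ((a : ZMod n) ≠ (b : ZMod n)) := by
    intro a b hab h hEq
    rw [ZMod.natCast_eq_natCast_iff] at hEq
    have hd := (Nat.modEq_iff_dvd' hab.le).mp hEq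
    have := Nat.le_of_dvd (by omega) hd
    omega
  set ψ := φ.symm with hψ
  let e : ℕ → G.edgeSet := fun i => ψ ((i : ℕ) : ZMod n)
  -- consecutive edges on the induced path are non-incident
  have disj : ∀ i : ℕ, 1 ≤ i → i + 1 ≤ 6 →
      ¬ Incid ((e i : Sym2 V)) ((e (i + 1) : Sym2 V)) := by
    intro i h1 h6
    have hadj : (cycZ n).Adj ((i : ℕ) : ZMod n) (((i + 1 : ℕ)) : ZMod n) := by
      rw [cycZ, SimpleGraph.fromRel_adj]
      refine ⟨modne i (i + 1) (by omega) (by omega), Or.inl ?_⟩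
      push_cast
      ring
    exact (ψ.map_rel_iff.mpr hadj).2
  -- non-consecutive edges on the induced path are incident
  have inc : ∀ i j : ℕ, 1 ≤ i → i + 2 ≤ j → j ≤ 6 →
      Incid ((e i : Sym2 V)) ((e j : Sym2 V)) := by
    intro i j h1 h2 h6
    have hne : ((i : ℕ) : ZMod n) ≠ ((j : ℕ) : ZMod n) := modne i j (by omega) (by omega)
    have hnadj : ¬ (cycZ n).Adj ((i : ℕ) : ZMod n) ((j : ℕ) : ZMod n) := by
      rw [cycZ, SimpleGraph.fromRel_adj]
      rintro ⟨-, h | h⟩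
      · exact modne (i + 1) j (by omega) (by omega) (by push_cast; exact h.symm)
      · exact modne i (j + 1) (by omega) (by omega) (by push_cast; exact h)
    have hnee : e i ≠ e j := fun h => hne (ψ.injective h)
    by_contra hni
    exact hnadj (ψ.map_rel_iff.mp ⟨hnee, hni⟩)
  have h46 : (e 4 : Sym2 V) ≠ (e 6 : Sym2 V) := by
    intro h
    exact modne 4 6 (by omega) (by omega) (ψ.injective (Subtype.ext h))
  obtain ⟨a, b, h1⟩ : ∃ x y, (e 1 : Sym2 V) = s(x, y) :=
    Sym2.inductionOn (e 1 : Sym2 V) fun x y => ⟨x, y, rfl⟩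
  have d12 := disj 1 (by omega) (by omega)
  have d34 := disj 3 (by omega) (by omega)
  have d45 := disj 4 (by omega) (by omega)
  have d56 := disj 5 (by omega) (by omega)
  have i13 := inc 1 3 (by omega) (by omega) (by omega)
  have i14 := inc 1 4 (by omega) (by omega) (by omega)
  have i15 := inc 1 5 (by omega) (by omega) (by omega)
  have i16 := inc 1 6 (by omega) (by omega) (by omega)
  have i24 := inc 2 4 (by omega) (by omega) (by omega)
  have i25 := inc 2 5 (by omega) (by omega) (by omega)
  have i26 := inc 2 6 (by omega) (by omega) (by omega)
  rw [h1] at d12 i13 i14 i15 i16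
  obtain ⟨v, hv1, hv3⟩ := i13
  rw [Sym2.mem_iff] at hv1
  rcases hv1 with rfl | rfl
  · exact incid_core (e 2 : Sym2 V) (e 3 : Sym2 V) (e 4 : Sym2 V) (e 5 : Sym2 V)
      (e 6 : Sym2 V) v b h46 d12 d34 d45 d56 hv3 i14 i15 i16 i24 i25 i26
  · rw [Sym2.eq_swap] at d12 i14 i15 i16
    exact incid_core (e 2 : Sym2 V) (e 3 : Sym2 V) (e 4 : Sym2 V) (e 5 : Sym2 V)
      (e 6 : Sym2 V) v a h46 d12 d34 d45 d56 hv3 i14 i15 i16 i24 i25 i26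
end
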